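/- arXiv:1109.1986 — 3 statements merged into one kernel-verified Lean document; each statement's English description precedes it below -/
import Mathlib

section
/- Let μ be a probability measure on the unit circle S¹ with arclength distance d, fix p₀ ∈ S¹. The one-sided left derivative of θ ↦ F_μ(e_{p₀}(θ)) exists at every θ ∈ [−π,π) (taking the left limit from θ = π for the point θ = −π), and equals θ − 2π μ_{p₀}([−π, −π+θ)) − m(μ_{p₀}) if 0 ≤ θ < π, and θ + 2π μ_{p₀}([π+θ, π)) − m(μ_{p₀}) if −π ≤ θ < 0; in particular this extended derivative is left continuous on [−π,π). -/
/-!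
In the chart centred at `p₀`, `d(x, e_{p₀}(t))` is the distance in `ℝ / 2πℤ` between
`s = e_{p₀}⁻¹(x)` and `t`, so `F_μ(e_{p₀}(t)) = ½ ∫ ‖s - t‖² dμ_{p₀}(s)` with `‖·‖` the norm of
`AddCircle (2π)`. For `t` slightly below `θ`, the representative `wrap (s - t) ∈ [-π, π)` of `s - t`
is `wrap (s - θ) + (θ - t)`, so each integrand has left derivative `-2 wrap (s - θ)` at `θ`; the
integrands are uniformly Lipschitz in `t`, and dominated convergence gives the left derivative
`-∫ wrap (s - θ) dμ_{p₀}(s)`. Since `μ_{p₀}` lives on `[-π, π)`, `wrap (s - θ)` differs from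
`s - θ` by `±2π` exactly on `[-π, -π + θ)` (for `θ ≥ 0`) or `[π + θ, π)` (for `θ < 0`), which yields
the explicit formula. Left continuity comes from the right continuity of `wrap` and dominated
convergence again.
-/

open MeasureTheory Real Set Filter

noncomputable section

/-- The unit circle `S¹` in `ℝ² ≃ ℂ`. -/
abbrev S1 := {x : ℂ // ‖x‖ = 1}

/-- The arclength distance on `S¹`. -/
def dS1 (x p : S1) : ℝ := 2 * Real.arcsin (‖(x : ℂ) - (p : ℂ)‖ / 2)

/-- The Fréchet functional of a measure `μ` on `S¹`. -/
def frechet (μ : Measure S1) (p : S1) : ℝ := (1/2) * ∫ x, (dS1 x p)^2 ∂μ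

/-- The normal coordinate chart centered at `p`: `θ ↦ R_θ p`. -/
def chart (p : S1) (θ : ℝ) : S1 :=
  ⟨Complex.exp (θ * Complex.I) * (p : ℂ), by
    rw [norm_mul, Complex.norm_exp_ofReal_mul_I, p.2, mul_one]⟩

/-- The inverse chart, with values in `[-π, π)`. -/
def invChart (p₀ : S1) (p : S1) : ℝ :=
  if Complex.arg ((p : ℂ) / (p₀ : ℂ)) = π then -π else Complex.arg ((p : ℂ) / (p₀ : ℂ))

/-- The image measure `μ_{p₀}` of `μ` in the normal chart centered at `p₀`. -/
def chartMeasure (μ : Measure S1) (p₀ : S1) : Measure ℝ := Measure.map (invChart p₀) μ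

/-- `m(μ_{p₀})`, the Euclidean mean of the image measure in the chart centered at `p₀`. -/
def mMean (μ : Measure S1) (p₀ : S1) : ℝ := ∫ t, t ∂(chartMeasure μ p₀)

/-- The antipodal point (cut locus) of `p`. -/
def antipode (p : S1) : S1 := ⟨-(p : ℂ), by rw [norm_neg]; exact p.2⟩

/-- The (left-continuous extension of the) derivative of `θ ↦ F_μ(e_{p₀}(θ))`. -/
def frechetExtDeriv (μ : Measure S1) (p₀ : S1) (θ : ℝ) : ℝ :=
  if 0 ≤ θ then θ - 2*π*(chartMeasure μ p₀ (Ico (-π) (-π+θ))).toReal - mMean μ p₀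
  else θ + 2*π*(chartMeasure μ p₀ (Ico (π+θ) π)).toReal - mMean μ p₀

def basePt : S1 := ⟨1, by norm_num⟩

/-- The (unnormalized) arclength measure on `S¹`, of total mass `2π`. -/
def arcMeasure : Measure S1 := Measure.map (chart basePt) (volume.restrict (Ico (-π) π))

/-- Property `P(p, α, φ)` for a density `f` on `S¹`. -/
def propP (f : S1 → ℝ) (p : S1) (α φ : ℝ) : Prop :=
  ∀ θ ∈ Ico (-π) π, φ ≤ |θ| → f (chart p θ) ≤ (1 - α)/(2*π)

open Topology

theorem hasDerivWithinAt_integral_of_lipschitz {α : Type*} [MeasurableSpace α] {ν : Measure α}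
    [IsFiniteMeasure ν] {F : ℝ → α → ℝ} {F' : α → ℝ} {S : Set ℝ} {θ C : ℝ}
    (hF : ∀ t, Integrable (F t) ν) (hlip : ∀ t s, |F t s - F θ s| ≤ C * |t - θ|)
    (hderiv : ∀ s, HasDerivWithinAt (F · s) (F' s) S θ) :
    HasDerivWithinAt (fun t => ∫ s, F t s ∂ν) (∫ s, F' s ∂ν) S θ := by
  simp only [hasDerivWithinAt_iff_tendsto_slope] at hderiv ⊢
  have hslope (t : ℝ) : slope (fun t => ∫ s, F t s ∂ν) θ t = ∫ s, slope (F · s) θ t ∂ν := by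
    simp only [slope_def_field, ← integral_sub (hF t) (hF θ), integral_div]
  refine (tendsto_congr hslope).2 <| tendsto_integral_filter_of_dominated_convergence (fun _ => C)
    (Eventually.of_forall fun t => ?_) ?_ (integrable_const C) (ae_of_all _ hderiv)
  · simpa only [slope_def_field, Pi.sub_apply] using
      (((hF t).sub (hF θ)).div_const (t - θ)).aestronglyMeasurable
  · filter_upwards [self_mem_nhdsWithin] with t ht
    refine ae_of_all _ fun s => ?_
    rw [slope_def_field, norm_div, Real.norm_eq_abs, Real.norm_eq_abs,
      div_le_iff₀ (abs_pos.2 (sub_ne_zero.2 ht.2))]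
    exact hlip t s

def wrap (s : ℝ) : ℝ := toIcoMod two_pi_pos (-π) s

lemma wrap_mem (s : ℝ) : wrap s ∈ Ico (-π) π := by
  have h := toIcoMod_mem_Ico two_pi_pos (-π) s
  rwa [show -π + 2 * π = π by ring] at h

lemma abs_wrap_le (s : ℝ) : |wrap s| ≤ π :=
  abs_le.2 ⟨(wrap_mem s).1, (wrap_mem s).2.le⟩

lemma wrap_eq_iff {s c : ℝ} : wrap s = c ↔ c ∈ Ico (-π) π ∧ ∃ n : ℤ, s = c + n * (2 * π) := by
  simp [wrap, toIcoMod_eq_iff, show -π + 2 * π = π by ring, zsmul_eq_mul]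

lemma exists_wrap_sub_eq (s : ℝ) : ∃ n : ℤ, wrap s = s - n * (2 * π) := by
  obtain ⟨n, hn⟩ := (wrap_eq_iff.1 (rfl : wrap s = wrap s)).2
  exact ⟨n, by linarith⟩

lemma wrap_add_two_pi (s : ℝ) : wrap (s + 2 * π) = wrap s :=
  toIcoMod_add_right two_pi_pos (-π) s

lemma measurable_wrap : Measurable wrap := by
  have : wrap = fun s => s - ⌊(s - -π) / (2 * π)⌋ * (2 * π) := by
    ext s
    rw [wrap, toIcoMod, toIcoDiv_eq_floor, zsmul_eq_mul]
  rw [this]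
  fun_prop

lemma exp_wrap_mul_I (s : ℝ) :
    Complex.exp (wrap s * Complex.I) = Complex.exp (s * Complex.I) := by
  obtain ⟨n, hn⟩ := exists_wrap_sub_eq s
  rw [hn]
  push_cast
  exact Complex.exp_mul_I_periodic.sub_int_mul_eq n

lemma coe_wrap (s : ℝ) : ((wrap s : ℝ) : AddCircle (2 * π)) = s := by
  obtain ⟨n, hn⟩ := exists_wrap_sub_eq s
  rw [eq_comm, ← sub_eq_zero, ← AddCircle.coe_sub, AddCircle.coe_eq_zero_iff]
  exact ⟨n, by rw [zsmul_eq_mul]; linarith⟩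

lemma norm_coe_eq_abs_wrap (s : ℝ) : ‖(s : AddCircle (2 * π))‖ = |wrap s| := by
  rw [← coe_wrap, AddCircle.norm_coe_eq_abs_iff _ two_pi_pos.ne', abs_of_pos two_pi_pos]
  linarith [abs_wrap_le s]

lemma wrap_sub_eventuallyEq (s θ : ℝ) :
    ∀ᶠ t in 𝓝[≤] θ, wrap (s - t) = wrap (s - θ) + (θ - t) := by
  obtain ⟨hlo, hhi⟩ := wrap_mem (s - θ)
  obtain ⟨n, hn⟩ := exists_wrap_sub_eq (s - θ)
  filter_upwards [Ioc_mem_nhdsLE (show wrap (s - θ) - π + θ < θ by linarith)] with t ht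
  exact wrap_eq_iff.2 ⟨⟨by linarith [ht.2], by linarith [ht.1]⟩, n, by linarith⟩

lemma continuousWithinAt_wrap_sub (s θ : ℝ) :
    ContinuousWithinAt (fun t => wrap (s - t)) (Iic θ) θ :=
  (continuousWithinAt_toIcoMod_Ici two_pi_pos (-π) (s - θ)).comp
    (continuous_const.sub continuous_id).continuousWithinAt fun _ ht => sub_le_sub_left ht s

lemma hasDerivWithinAt_norm_coe_sub_sq (s θ : ℝ) :
    HasDerivWithinAt (fun t => ‖((s - t : ℝ) : AddCircle (2 * π))‖ ^ 2)
      (-2 * wrap (s - θ)) (Iic θ) θ := by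
  have hline : HasDerivAt (fun t => (wrap (s - θ) + (θ - t)) ^ 2) (-2 * wrap (s - θ)) θ := by
    simpa using (((hasDerivAt_id θ).const_sub θ).const_add (wrap (s - θ))).fun_pow 2
  refine hline.hasDerivWithinAt.congr_of_eventuallyEq ?_
    (by rw [norm_coe_eq_abs_wrap, sq_abs, sub_self, add_zero])
  filter_upwards [wrap_sub_eventuallyEq s θ] with t ht
  rw [norm_coe_eq_abs_wrap, sq_abs, ht]

lemma abs_norm_sq_sub_norm_sq_le (u v : AddCircle (2 * π)) :
    |‖u‖ ^ 2 - ‖v‖ ^ 2| ≤ 2 * π * ‖u - v‖ := by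
  have hhalf (w : AddCircle (2 * π)) : ‖w‖ ≤ π := by
    simpa [abs_of_pos two_pi_pos] using
      AddCircle.norm_le_half_period (2 * π) two_pi_pos.ne' (x := w)
  calc |‖u‖ ^ 2 - ‖v‖ ^ 2| = |‖u‖ - ‖v‖| * (‖u‖ + ‖v‖) := by
        rw [sq_sub_sq, abs_mul, abs_of_nonneg (by positivity : 0 ≤ ‖u‖ + ‖v‖), mul_comm]
    _ ≤ ‖u - v‖ * (2 * π) := by
        gcongr
        exacts [abs_norm_sub_norm_le u v, by linarith [hhalf u, hhalf v]]
    _ = 2 * π * ‖u - v‖ := mul_comm _ _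

section FiniteMeasure

variable (ν : Measure ℝ) [IsFiniteMeasure ν]

lemma integrable_norm_coe_sub_sq (t : ℝ) :
    Integrable (fun s => ‖((s - t : ℝ) : AddCircle (2 * π))‖ ^ 2) ν := by
  refine Integrable.of_bound (by fun_prop) (π ^ 2) (ae_of_all _ fun s => ?_)
  rw [Real.norm_eq_abs, abs_pow, abs_norm, norm_coe_eq_abs_wrap]
  exact pow_le_pow_left₀ (abs_nonneg _) (abs_wrap_le _) 2

lemma hasDerivWithinAt_integral_norm_coe_sub_sq (θ : ℝ) :
    HasDerivWithinAt (fun t => ∫ s, ‖((s - t : ℝ) : AddCircle (2 * π))‖ ^ 2 ∂ν)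
      (-2 * ∫ s, wrap (s - θ) ∂ν) (Iic θ) θ := by
  rw [← integral_const_mul]
  refine hasDerivWithinAt_integral_of_lipschitz (C := 2 * π) (integrable_norm_coe_sub_sq ν)
    (fun t s => ?_) (fun s => hasDerivWithinAt_norm_coe_sub_sq s θ)
  refine (abs_norm_sq_sub_norm_sq_le _ _).trans ?_
  gcongr
  rw [← AddCircle.coe_sub, sub_sub_sub_cancel_left, abs_sub_comm]
  exact QuotientAddGroup.norm_mk_le_norm

lemma continuousWithinAt_integral_wrap_sub (θ : ℝ) :
    ContinuousWithinAt (fun t => ∫ s, wrap (s - t) ∂ν) (Iic θ) θ :=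
  continuousWithinAt_of_dominated
    (Eventually.of_forall fun t =>
      (measurable_wrap.comp (measurable_id.sub_const t)).aestronglyMeasurable)
    (Eventually.of_forall fun t => ae_of_all _ fun s => abs_wrap_le (s - t))
    (integrable_const π) (ae_of_all _ fun s => continuousWithinAt_wrap_sub s θ)

end FiniteMeasure

lemma wrap_sub_of_nonneg {s θ : ℝ} (hs : s ∈ Ico (-π) π) (hθ : θ ∈ Ico 0 π) :
    wrap (s - θ) = s - θ + (Ico (-π) (-π + θ)).indicator (fun _ => 2 * π) s := by
  by_cases hlow : s < -π + θ
  · rw [indicator_of_mem (show s ∈ Ico (-π) (-π + θ) from ⟨hs.1, hlow⟩)]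
    exact wrap_eq_iff.2 ⟨⟨by linarith [hs.1, hθ.2], by linarith⟩, -1, by push_cast; ring⟩
  · rw [indicator_of_notMem fun h => hlow h.2, add_zero]
    exact wrap_eq_iff.2 ⟨⟨by linarith, by linarith [hs.2, hθ.1]⟩, 0, by simp⟩

lemma wrap_sub_of_neg {s θ : ℝ} (hs : s ∈ Ico (-π) π) (hθ : θ ∈ Ico (-π) 0) :
    wrap (s - θ) = s - θ - (Ico (π + θ) π).indicator (fun _ => 2 * π) s := by
  by_cases hhigh : π + θ ≤ s
  · rw [indicator_of_mem (show s ∈ Ico (π + θ) π from ⟨hhigh, hs.2⟩)]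
    exact wrap_eq_iff.2 ⟨⟨by linarith, by linarith [hs.2, hθ.1]⟩, 1, by push_cast; ring⟩
  · rw [indicator_of_notMem fun h => hhigh h.1, sub_zero]
    exact wrap_eq_iff.2 ⟨⟨by linarith [hs.1, hθ.2], by linarith⟩, 0, by simp⟩

section FundamentalDomain

variable {ν : Measure ℝ} [IsProbabilityMeasure ν]

lemma integrable_id_of_ae_mem_Ico (hν : ∀ᵐ s ∂ν, s ∈ Ico (-π) π) :
    Integrable (fun s => s) ν :=
  Integrable.of_bound aestronglyMeasurable_id π <| hν.mono fun _ hs => abs_le.2 ⟨hs.1, hs.2.le⟩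

lemma integral_wrap_sub_of_nonneg (hν : ∀ᵐ s ∂ν, s ∈ Ico (-π) π) {θ : ℝ} (hθ : θ ∈ Ico 0 π) :
    ∫ s, wrap (s - θ) ∂ν = ∫ s, s ∂ν - θ + 2 * π * ν.real (Ico (-π) (-π + θ)) := by
  have hid := integrable_id_of_ae_mem_Ico hν
  have hshift : Integrable (fun s => s - θ) ν := hid.sub (integrable_const θ)
  rw [integral_congr_ae (hν.mono fun s hs => wrap_sub_of_nonneg hs hθ),
    integral_add hshift ((integrable_const _).indicator measurableSet_Ico),
    integral_sub hid (integrable_const θ), integral_const,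
    integral_indicator_const _ measurableSet_Ico]
  simp [mul_comm]

lemma integral_wrap_sub_of_neg (hν : ∀ᵐ s ∂ν, s ∈ Ico (-π) π) {θ : ℝ} (hθ : θ ∈ Ico (-π) 0) :
    ∫ s, wrap (s - θ) ∂ν = ∫ s, s ∂ν - θ - 2 * π * ν.real (Ico (π + θ) π) := by
  have hid := integrable_id_of_ae_mem_Ico hν
  have hshift : Integrable (fun s => s - θ) ν := hid.sub (integrable_const θ)
  rw [integral_congr_ae (hν.mono fun s hs => wrap_sub_of_neg hs hθ),
    integral_sub hshift ((integrable_const _).indicator measurableSet_Ico),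
    integral_sub hid (integrable_const θ), integral_const,
    integral_indicator_const _ measurableSet_Ico]
  simp [mul_comm]

end FundamentalDomain

lemma two_mul_arcsin_norm_exp_mul_I_sub_one_div_two {a : ℝ} (ha : |a| ≤ π) :
    2 * arcsin (‖Complex.exp (a * Complex.I) - 1‖ / 2) = |a| := by
  rw [mul_comm (a : ℂ), Complex.norm_exp_I_mul_ofReal_sub_one, norm_mul, Real.norm_two,
    Real.norm_eq_abs, mul_div_cancel_left₀ _ two_ne_zero]
  obtain ⟨hlo, hhi⟩ := abs_le.1 ha
  rcases le_total 0 a with h | h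
  · rw [abs_of_nonneg h, abs_of_nonneg (sin_nonneg_of_nonneg_of_le_pi (by linarith) (by linarith)),
      arcsin_sin (by linarith) (by linarith)]
    ring
  · rw [abs_of_nonpos h,
      abs_of_nonpos (sin_nonpos_of_nonpos_of_neg_pi_le (by linarith) (by linarith)), ← sin_neg,
      arcsin_sin (by linarith) (by linarith)]
    ring

lemma invChart_mem (p₀ x : S1) : invChart p₀ x ∈ Ico (-π) π := by
  unfold invChart
  split_ifs with h
  · exact ⟨le_rfl, by linarith [pi_pos]⟩
  · exact ⟨(Complex.neg_pi_lt_arg _).le, (Complex.arg_le_pi _).lt_of_ne h⟩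

lemma measurable_invChart (p₀ : S1) : Measurable (invChart p₀) := by
  have harg : Measurable fun x : S1 => Complex.arg ((x : ℂ) / (p₀ : ℂ)) :=
    Complex.measurable_arg.comp (measurable_subtype_coe.div_const _)
  exact Measurable.ite (harg (measurableSet_singleton π)) measurable_const harg

lemma exp_invChart_mul_I_mul (p₀ x : S1) :
    Complex.exp (invChart p₀ x * Complex.I) * (p₀ : ℂ) = x := by
  have hp₀ : (p₀ : ℂ) ≠ 0 := by simp [← norm_ne_zero_iff, p₀.2]
  have harg : Complex.exp (Complex.arg ((x : ℂ) / p₀) * Complex.I) = (x : ℂ) / p₀ := by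
    simpa [norm_div, x.2, p₀.2] using Complex.norm_mul_exp_arg_mul_I ((x : ℂ) / p₀)
  suffices Complex.exp (invChart p₀ x * Complex.I) = (x : ℂ) / p₀ by
    rw [this, div_mul_cancel₀ _ hp₀]
  unfold invChart
  split_ifs with h
  · rw [← harg, h, Complex.ofReal_neg, neg_mul, Complex.exp_neg_pi_mul_I, Complex.exp_pi_mul_I]
  · exact harg

lemma dS1_chart (p₀ x : S1) (t : ℝ) :
    dS1 x (chart p₀ t) = ‖((invChart p₀ x - t : ℝ) : AddCircle (2 * π))‖ := by
  have hsub : (x : ℂ) - (chart p₀ t : ℂ)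
      = (Complex.exp (wrap (invChart p₀ x - t) * Complex.I) - 1)
        * (Complex.exp (t * Complex.I) * p₀) := by
    rw [exp_wrap_mul_I, Complex.ofReal_sub, sub_mul (invChart p₀ x : ℂ), Complex.exp_sub]
    conv_lhs => rw [← exp_invChart_mul_I_mul p₀ x]
    simp only [chart]
    field_simp
  rw [dS1, hsub, norm_mul, norm_mul, Complex.norm_exp_ofReal_mul_I, p₀.2, mul_one, mul_one,
    two_mul_arcsin_norm_exp_mul_I_sub_one_div_two (abs_wrap_le _), norm_coe_eq_abs_wrap]

section ChartMeasure

variable (μ : Measure S1) (p₀ : S1)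

instance [IsProbabilityMeasure μ] : IsProbabilityMeasure (chartMeasure μ p₀) :=
  Measure.isProbabilityMeasure_map (measurable_invChart p₀).aemeasurable

lemma ae_mem_Ico_chartMeasure : ∀ᵐ s ∂(chartMeasure μ p₀), s ∈ Ico (-π) π :=
  (ae_map_iff (measurable_invChart p₀).aemeasurable measurableSet_Ico).2 <|
    ae_of_all _ (invChart_mem p₀)

lemma frechet_chart (t : ℝ) :
    frechet μ (chart p₀ t)
      = 1 / 2 * ∫ s, ‖((s - t : ℝ) : AddCircle (2 * π))‖ ^ 2 ∂(chartMeasure μ p₀) := by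
  rw [frechet, chartMeasure, integral_map (measurable_invChart p₀).aemeasurable (by fun_prop)]
  simp only [dS1_chart]

lemma frechetExtDeriv_eq_neg_integral_wrap [IsProbabilityMeasure μ] {θ : ℝ}
    (hθ : θ ∈ Ico (-π) π) :
    frechetExtDeriv μ p₀ θ = -∫ s, wrap (s - θ) ∂(chartMeasure μ p₀) := by
  unfold frechetExtDeriv mMean
  split_ifs with h
  · rw [integral_wrap_sub_of_nonneg (ae_mem_Ico_chartMeasure μ p₀) ⟨h, hθ.2⟩, measureReal_def]
    ring
  · rw [integral_wrap_sub_of_neg (ae_mem_Ico_chartMeasure μ p₀) ⟨hθ.1, not_le.1 h⟩,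
      measureReal_def]
    ring

lemma frechetExtDeriv_eventuallyEq [IsProbabilityMeasure μ] {θ : ℝ} (hθ : θ ∈ Ioc (-π) π) :
    frechetExtDeriv μ p₀ =ᶠ[𝓝[<] θ] fun t => -∫ s, wrap (s - t) ∂(chartMeasure μ p₀) := by
  filter_upwards [Ioo_mem_nhdsLT hθ.1] with t ht
  exact frechetExtDeriv_eq_neg_integral_wrap μ p₀ ⟨ht.1.le, ht.2.trans_le hθ.2⟩

end ChartMeasure

/-- the left derivative of `θ ↦ F_μ(e_{p₀}(θ))` exists at every
`θ ∈ [-π, π)` and is given by the explicit formula `extDeriv` (at `θ = -π`, since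
`θ ↦ chart p₀ θ` is `2π`-periodic, the left derivative within `Iio (-π)` is exactly
the left limit from `θ = π`); moreover this extended derivative is left continuous
on `[-π, π)` (again with the limit from `π` at the point `-π`). -/
theorem frechet_left_deriv (μ : Measure S1) [IsProbabilityMeasure μ] (p₀ : S1) :
    (∀ θ ∈ Ico (-π) π,
      HasDerivWithinAt (fun t => frechet μ (chart p₀ t)) (frechetExtDeriv μ p₀ θ) (Iio θ) θ) ∧
    (∀ θ ∈ Ioo (-π) π,
      Tendsto (frechetExtDeriv μ p₀) (nhdsWithin θ (Iio θ)) (nhds (frechetExtDeriv μ p₀ θ))) ∧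
    Tendsto (frechetExtDeriv μ p₀) (nhdsWithin π (Iio π)) (nhds (frechetExtDeriv μ p₀ (-π))) := by
  have hcont (θ : ℝ) :
      ContinuousWithinAt (fun t => -∫ s, wrap (s - t) ∂(chartMeasure μ p₀)) (Iio θ) θ :=
    (continuousWithinAt_integral_wrap_sub _ θ).neg.mono Iio_subset_Iic_self
  refine ⟨fun θ hθ => ?_, fun θ hθ => ?_, ?_⟩
  · have hderiv :=
      (hasDerivWithinAt_integral_norm_coe_sub_sq (chartMeasure μ p₀) θ).const_mul (1 / 2)
    simp only [← frechet_chart] at hderiv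
    refine (hderiv.mono Iio_subset_Iic_self).congr_deriv ?_
    rw [frechetExtDeriv_eq_neg_integral_wrap μ p₀ hθ]
    ring
  · exact (hcont θ).congr_of_eventuallyEq (frechetExtDeriv_eventuallyEq μ p₀ ⟨hθ.1, hθ.2.le⟩)
      (frechetExtDeriv_eq_neg_integral_wrap μ p₀ ⟨hθ.1.le, hθ.2⟩)
  · have hperiod : frechetExtDeriv μ p₀ (-π) = -∫ s, wrap (s - π) ∂(chartMeasure μ p₀) := by
      rw [frechetExtDeriv_eq_neg_integral_wrap μ p₀ ⟨le_rfl, by linarith [pi_pos]⟩]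
      congr 1
      refine integral_congr_ae (ae_of_all _ fun s => ?_)
      show wrap (s - -π) = wrap (s - π)
      rw [← wrap_add_two_pi (s - π)]
      ring_nf
    rw [hperiod]
    exact (hcont π).congr' (frechetExtDeriv_eventuallyEq μ p₀ ⟨by linarith [pi_pos], le_rfl⟩).symm
end
end

section
/- Let f : S¹ → ℝ⁺ be a probability density on the unit circle, let p₁, p₂ ∈ S¹, α ∈ (0,1] and φ ∈ (0, π/2). If d(p₁,p₂) < π − φ and f satisfies property P(p₁,α,φ), then f satisfies property P(p₂, α, φ + d(p₁,p₂)). -/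
open MeasureTheory Real Set Filter

noncomputable section

/-- The (left-continuous extension of the) derivative of `θ ↦ F_μ(e_{p₀}(θ))`. -/
def extDerivS1 (μ : Measure S1) (p₀ : S1) (θ : ℝ) : ℝ :=
  if 0 ≤ θ then θ - 2*π*(chartMeasure μ p₀ (Ico (-π) (-π+θ))).toReal - mMean μ p₀
  else θ + 2*π*(chartMeasure μ p₀ (Ico (π+θ) π)).toReal - mMean μ p₀

/-! Property `P(p, α, φ)` says exactly that `f ≤ (1 - α)/(2π)` outside the open `d`-ball of
radius `φ` about `p`, because the chart at `p` maps `[-π, π)` onto `S¹` and `d(e_p(θ), p) = |θ|`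
there. The transport is then the triangle inequality `d(x, p₁) ≥ d(x, p₂) - d(p₁, p₂)`, which
follows from `e_{e_p(b)}(a) = e_p(a + b)` and `d(e_p(θ), p) ≤ |θ|` for every real `θ`. -/

lemma arcsin_abs_sin_of_abs_le {t : ℝ} (ht : |t| ≤ π / 2) : arcsin |sin t| = |t| := by
  rw [abs_sin_eq_sin_abs_of_abs_le_pi (by linarith [pi_pos]),
    arcsin_sin (by linarith [abs_nonneg t, pi_pos]) ht]

lemma arcsin_abs_sin_le_abs (t : ℝ) : arcsin |sin t| ≤ |t| := by
  rcases le_or_gt |t| (π / 2) with ht | ht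
  · exact (arcsin_abs_sin_of_abs_le ht).le
  · exact (arcsin_le_pi_div_two _).trans ht.le

lemma dS1_comm (x y : S1) : dS1 x y = dS1 y x := by
  rw [dS1, dS1, norm_sub_rev]

lemma chart_chart (p : S1) (a b : ℝ) : chart (chart p b) a = chart p (a + b) := by
  apply Subtype.ext
  simp only [chart, ← mul_assoc, ← Complex.exp_add]
  push_cast
  ring_nf

lemma chart_neg_pi (p : S1) : chart p (-π) = chart p π := by
  apply Subtype.ext
  simp only [chart, Complex.ofReal_neg, neg_mul, Complex.exp_neg, Complex.exp_pi_mul_I]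
  norm_num

lemma chart_arg_div (p x : S1) : chart p (Complex.arg ((x : ℂ) / p)) = x := by
  apply Subtype.ext
  have hp : (p : ℂ) ≠ 0 := by simp [← norm_ne_zero_iff, p.2]
  have hnorm : ‖(x : ℂ) / p‖ = 1 := by rw [norm_div, x.2, p.2, div_one]
  have := Complex.norm_mul_exp_arg_mul_I ((x : ℂ) / p)
  rw [hnorm, Complex.ofReal_one, one_mul] at this
  simp only [chart, this, div_mul_cancel₀ _ hp]

lemma chart_invChart (p x : S1) : chart p (invChart p x) = x := by
  unfold invChart
  split_ifs with h
  · rw [chart_neg_pi, ← h, chart_arg_div]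
  · exact chart_arg_div p x

lemma invChart_mem_Ico (p x : S1) : invChart p x ∈ Ico (-π) π := by
  obtain ⟨hlo, hhi⟩ := Complex.arg_mem_Ioc ((x : ℂ) / p)
  unfold invChart
  split_ifs with h
  · exact ⟨le_rfl, by linarith [pi_pos]⟩
  · exact ⟨hlo.le, lt_of_le_of_ne hhi h⟩

lemma dS1_chart_self (p : S1) (θ : ℝ) : dS1 (chart p θ) p = 2 * arcsin |sin (θ / 2)| := by
  have hsub : (chart p θ : ℂ) - p = (Complex.exp (Complex.I * θ) - 1) * p := by
    simp only [chart]; ring_nf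
  rw [dS1, hsub, norm_mul, p.2, mul_one, Complex.norm_exp_I_mul_ofReal_sub_one, norm_mul,
    Real.norm_two, Real.norm_eq_abs, mul_div_cancel_left₀ _ two_ne_zero]

lemma dS1_chart_self_le (p : S1) (θ : ℝ) : dS1 (chart p θ) p ≤ |θ| :=
  calc dS1 (chart p θ) p = 2 * arcsin |sin (θ / 2)| := dS1_chart_self p θ
    _ ≤ 2 * |θ / 2| := by gcongr; exact arcsin_abs_sin_le_abs _
    _ = |θ| := by rw [abs_div, abs_two]; ring

lemma dS1_chart_self_of_abs_le (p : S1) {θ : ℝ} (hθ : |θ| ≤ π) : dS1 (chart p θ) p = |θ| := by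
  rw [dS1_chart_self, arcsin_abs_sin_of_abs_le (by rw [abs_div, abs_two]; linarith), abs_div,
    abs_two]
  ring

lemma dS1_invChart (p x : S1) : dS1 x p = |invChart p x| := by
  obtain ⟨hlo, hhi⟩ := invChart_mem_Ico p x
  conv_lhs => rw [← chart_invChart p x]
  exact dS1_chart_self_of_abs_le p (abs_le.mpr ⟨hlo, hhi.le⟩)

lemma dS1_triangle (x y z : S1) : dS1 x z ≤ dS1 x y + dS1 y z := by
  set a := invChart y x
  set b := invChart z y
  have hx : x = chart z (a + b) := by
    rw [← chart_chart, chart_invChart, chart_invChart]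
  calc dS1 x z ≤ |a + b| := hx ▸ dS1_chart_self_le z (a + b)
    _ ≤ |a| + |b| := abs_add_le a b
    _ = dS1 x y + dS1 y z := by rw [dS1_invChart, dS1_invChart]

lemma propP_iff_forall_le_dS1 (f : S1 → ℝ) (p : S1) (α φ : ℝ) :
    propP f p α φ ↔ ∀ x, φ ≤ dS1 x p → f x ≤ (1 - α) / (2 * π) := by
  constructor
  · intro h x hx
    rw [← chart_invChart p x]
    exact h _ (invChart_mem_Ico p x) (dS1_invChart p x ▸ hx)
  · intro h θ hθ hφ
    exact h _ (by rwa [dS1_chart_self_of_abs_le p (abs_le.mpr ⟨hθ.1, hθ.2.le⟩)])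

theorem propP_transport_general (f : S1 → ℝ) (p₁ p₂ : S1) (α φ : ℝ) (h : propP f p₁ α φ) :
    propP f p₂ α (φ + dS1 p₁ p₂) := by
  rw [propP_iff_forall_le_dS1] at h ⊢
  intro x hx
  apply h
  linarith [dS1_triangle x p₁ p₂, dS1_comm p₁ p₂]

/-- Lemma `lemme.properties` (2): transport of property `P` between base
points: if `d(p₁,p₂) < π - φ` then `P(p₁,α,φ)` implies `P(p₂, α, φ + d(p₁,p₂))`. -/
theorem propP_transport (f : S1 → ℝ) (hf : ∀ x, 0 ≤ f x)
    (hprob : ∫ x, f x ∂arcMeasure = 1) (p₁ p₂ : S1) (α φ : ℝ)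
    (hα₀ : 0 < α) (hα : α ≤ 1) (hφ₀ : 0 < φ) (hφ : φ < π/2)
    (hd : dS1 p₁ p₂ < π - φ) (h : propP f p₁ α φ) :
    propP f p₂ α (φ + dS1 p₁ p₂) :=
  propP_transport_general f p₁ p₂ α φ h
end
end

section
/- Let X₁,…,Xₙ be independent identically distributed random variables with values in the unit circle S¹, with common distribution μ satisfying μ({p}) = 0 for every p ∈ S¹ (μ is non-atomic). Then, almost surely, the empirical Fréchet functional F_{μⁿ}(p) = (1/(2n)) Σ_{i=1}^n d(p,Xᵢ)² has a unique global minimizer on S¹ (the empirical Fréchet mean exists). -/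
open MeasureTheory Real Set Filter

noncomputable section

/-!
Write the sample points as `e^{iψᵢ}` and lift the angles to reals `bᵢ = ψᵢ + 2πkᵢ`. For every
lift, `Σ d(e^{iθ}, Xᵢ)² ≤ Σ (θ - bᵢ)²`, with equality at a given `θ` for a suitable lift; hence
a minimizer `e^{iφ}` has `φ` equal to the mean of some lift, and `n²` times the minimum value is
`n Σ bᵢ² - (Σ bᵢ)²`. Two distinct minimizers give lifts `k`, `k'` with equal values of this
quantity, which expands to an integer relation `Σ aᵢ ψᵢ ∈ πℤ` with
`aᵢ = n(kᵢ - k'ᵢ) - Σⱼ (kⱼ - k'ⱼ)`. The `aᵢ` cannot all vanish, since the two means would then differ by a multiple of `2π`. For a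
non-atomic law each such relation is a null event (Fubini in one coordinate), and there are
countably many of them.
-/

open InnerProductGeometry

lemma abs_toIocMod_le_abs (t : ℝ) : |toIocMod two_pi_pos (-π) t| ≤ |t| := by
  by_cases ht : t ∈ Ioc (-π) (-π + 2 * π)
  · rw [(toIocMod_eq_self two_pi_pos).2 ht]
  · have hmem := toIocMod_mem_Ioc two_pi_pos (-π) t
    rw [mem_Ioc] at hmem ht
    calc |toIocMod two_pi_pos (-π) t| ≤ π := abs_le.2 ⟨by linarith, by linarith⟩
      _ ≤ |t| := by
        rcases le_or_gt t (-π) with h | h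
        · exact le_abs.2 (Or.inr (by linarith))
        · exact le_abs.2 (Or.inl (by linarith [lt_of_not_ge fun h' => ht ⟨h, h'⟩]))

lemma dS1_eq_angle (x p : S1) : dS1 x p = angle (x : ℂ) (p : ℂ) := by
  set A := angle (x : ℂ) (p : ℂ) with hA
  have hA₀ : 0 ≤ A := angle_nonneg _ _
  have hAπ : A ≤ π := angle_le_pi _ _
  have hsin : 0 ≤ sin (A / 2) := sin_nonneg_of_nonneg_of_le_pi (by linarith) (by linarith)
  have hchord : ‖(x : ℂ) - p‖ = 2 * sin (A / 2) := by
    have hcos := norm_sub_sq_eq_norm_sq_add_norm_sq_sub_two_mul_norm_mul_norm_mul_cos_angle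
      (x : ℂ) (p : ℂ)
    have hhalf : cos A = 1 - 2 * sin (A / 2) ^ 2 := by
      rw [show A = 2 * (A / 2) by ring, cos_two_mul, cos_sq']; ring_nf
    rw [x.2, p.2, ← hA, hhalf] at hcos
    nlinarith [norm_nonneg ((x : ℂ) - p)]
  rw [dS1, hchord, mul_div_cancel_left₀ _ two_ne_zero,
    arcsin_sin (by linarith) (by linarith)]
  ring

lemma chart_basePt_coe (θ : ℝ) : (chart basePt θ : ℂ) = Complex.exp (θ * Complex.I) :=
  mul_one _

lemma dS1_chart_basePt (θ ψ : ℝ) :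
    dS1 (chart basePt θ) (chart basePt ψ) = |toIocMod two_pi_pos (-π) (θ - ψ)| := by
  rw [dS1_eq_angle, chart_basePt_coe, chart_basePt_coe, Complex.angle_exp_exp]

lemma chart_basePt_arg (x : S1) : chart basePt (Complex.arg x) = x := by
  apply Subtype.ext
  rw [chart_basePt_coe]
  simpa [x.2] using Complex.norm_mul_exp_arg_mul_I (x : ℂ)

lemma chart_basePt_add_int_mul_two_pi (θ : ℝ) (m : ℤ) :
    chart basePt (θ + m * (2 * π)) = chart basePt θ := by
  apply Subtype.ext
  rw [chart_basePt_coe, chart_basePt_coe]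
  exact_mod_cast Complex.exp_mul_I_periodic.int_mul m θ

lemma dS1_chart_basePt_le (θ ψ : ℝ) (k : ℤ) :
    dS1 (chart basePt θ) (chart basePt ψ) ≤ |θ - (ψ + k * (2 * π))| := by
  rw [dS1_chart_basePt,
    show θ - (ψ + k * (2 * π)) = θ - ψ - k • (2 * π) by rw [zsmul_eq_mul]; ring,
    ← toIocMod_sub_zsmul two_pi_pos (-π) (θ - ψ) k]
  exact abs_toIocMod_le_abs _

lemma exists_dS1_chart_basePt_eq (θ ψ : ℝ) :
    ∃ k : ℤ, dS1 (chart basePt θ) (chart basePt ψ) = |θ - (ψ + k * (2 * π))| :=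
  ⟨toIocDiv two_pi_pos (-π) (θ - ψ), by
    rw [dS1_chart_basePt, toIocMod, zsmul_eq_mul, sub_add_eq_sub_sub]⟩

instance : CompactSpace S1 := by
  have h : IsCompact {x : ℂ | ‖x‖ = 1} := by
    simpa [Metric.sphere, dist_zero_right] using isCompact_sphere (0 : ℂ) 1
  exact isCompact_iff_compactSpace.1 h

lemma continuous_dS1_left (x : S1) : Continuous fun p => dS1 p x := by
  unfold dS1; fun_prop

section
variable {ι : Type*} [Fintype ι]

/-- `card ι ^ 2` times the empirical variance of `u`. -/
def spread {R : Type*} [CommRing R] (u : ι → R) : R :=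
  Fintype.card ι * ∑ i, u i ^ 2 - (∑ i, u i) ^ 2

def IntIndepModPi (ψ : ι → ℝ) : Prop :=
  ∀ (a : ι → ℤ) (N : ℤ), ∑ i, (a i : ℝ) * ψ i = π * N → a = 0

lemma card_mul_sum_sq_sub (b : ι → ℝ) (θ : ℝ) :
    Fintype.card ι * ∑ i, (θ - b i) ^ 2 = (Fintype.card ι * θ - ∑ i, b i) ^ 2 + spread b := by
  simp only [spread, sub_sq, Finset.sum_add_distrib, Finset.sum_sub_distrib, Finset.sum_const,
    Finset.card_univ, nsmul_eq_mul, ← Finset.mul_sum]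
  ring

lemma card_mul_eq_sum_of_forall_sum_sq_le [Nonempty ι] {b : ι → ℝ} {φ : ℝ}
    (hφ : ∀ θ, ∑ i, (φ - b i) ^ 2 ≤ ∑ i, (θ - b i) ^ 2) :
    Fintype.card ι * φ = ∑ i, b i ∧ Fintype.card ι * ∑ i, (φ - b i) ^ 2 = spread b := by
  have hn : (0 : ℝ) < Fintype.card ι := by exact_mod_cast Fintype.card_pos
  have hle := mul_le_mul_of_nonneg_left (hφ ((∑ i, b i) / Fintype.card ι)) hn.le
  rw [card_mul_sum_sq_sub, card_mul_sum_sq_sub, mul_div_cancel₀ _ hn.ne', sub_self,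
    zero_pow two_ne_zero, zero_add] at hle
  have hcentre : Fintype.card ι * φ - ∑ i, b i = 0 := pow_eq_zero_iff two_ne_zero |>.1 <|
    le_antisymm (by linarith) (sq_nonneg _)
  refine ⟨sub_eq_zero.1 hcentre, ?_⟩
  rw [card_mul_sum_sq_sub, hcentre, zero_pow two_ne_zero, zero_add]

lemma spread_add_int_mul (ψ : ι → ℝ) (k : ι → ℤ) (c : ℝ) :
    spread (fun i => ψ i + k i * c) =
      spread ψ + 2 * c * ∑ i, (Fintype.card ι * k i - ∑ j, k j : ℤ) * ψ i
        + c ^ 2 * (spread k : ℤ) := by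
  have hsq : ∀ i, (ψ i + k i * c) ^ 2 = ψ i ^ 2 + 2 * c * (k i * ψ i) + c ^ 2 * (k i : ℝ) ^ 2 :=
    fun i => by ring
  have hlin : ∀ i, ((Fintype.card ι * k i - ∑ j, k j : ℤ) : ℝ) * ψ i =
      Fintype.card ι * (k i * ψ i) - (∑ j, (k j : ℝ)) * ψ i := fun i => by push_cast; ring
  simp only [spread, hsq, hlin, Finset.sum_add_distrib, Finset.sum_sub_distrib, ← Finset.mul_sum,
    ← Finset.sum_mul]
  push_cast
  ring

lemma exists_eq_add_int_mul_two_pi_of_spread_eq [Nonempty ι] {ψ : ι → ℝ} (hψ : IntIndepModPi ψ)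
    {k k' : ι → ℤ} {φ χ : ℝ} (hφ : Fintype.card ι * φ = ∑ i, (ψ i + k i * (2 * π)))
    (hχ : Fintype.card ι * χ = ∑ i, (ψ i + k' i * (2 * π)))
    (hspread : spread (fun i => ψ i + k i * (2 * π)) = spread (fun i => ψ i + k' i * (2 * π))) :
    ∃ m : ℤ, φ = χ + m * (2 * π) := by
  set n := Fintype.card ι
  rw [spread_add_int_mul, spread_add_int_mul] at hspread
  have hrel : ∑ i, (((n * k i - ∑ j, k j) - (n * k' i - ∑ j, k' j) : ℤ) : ℝ) * ψ i
      = π * (spread k' - spread k : ℤ) := by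
    refine mul_left_cancel₀ (by positivity : 4 * π ≠ 0) ?_
    push_cast at hspread ⊢
    simp only [sub_mul (_ - _), Finset.sum_sub_distrib] at hspread ⊢
    linear_combination hspread
  obtain ⟨i₀⟩ := ‹Nonempty ι›
  have hcoeff : (n * k i₀ - ∑ j, k j) - (n * k' i₀ - ∑ j, k' j) = 0 := by
    simpa using congr_fun (hψ _ _ hrel) i₀
  refine ⟨k i₀ - k' i₀, mul_left_cancel₀ (by exact_mod_cast Fintype.card_ne_zero : (n : ℝ) ≠ 0) ?_⟩
  have hdiff : (n : ℤ) * (k i₀ - k' i₀) = ∑ j, k j - ∑ j, k' j := by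
    linear_combination hcoeff
  have hdiff' : (n : ℝ) * (k i₀ - k' i₀) = ∑ j, (k j : ℝ) - ∑ j, (k' j : ℝ) := by
    exact_mod_cast hdiff
  rw [mul_add, hχ, hφ]
  simp only [Finset.sum_add_distrib, ← Finset.sum_mul]
  push_cast
  linear_combination (-(2 * π)) * hdiff'

lemma exists_lift_of_forall_sum_sq_dS1_le [Nonempty ι] (ψ : ι → ℝ) (φ : ℝ)
    (hφ : ∀ q : S1, ∑ i, dS1 (chart basePt φ) (chart basePt (ψ i)) ^ 2
      ≤ ∑ i, dS1 q (chart basePt (ψ i)) ^ 2) :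
    ∃ k : ι → ℤ, Fintype.card ι * φ = ∑ i, (ψ i + k i * (2 * π)) ∧
      Fintype.card ι * ∑ i, dS1 (chart basePt φ) (chart basePt (ψ i)) ^ 2
        = spread (fun i => ψ i + k i * (2 * π)) := by
  choose k hk using fun i => exists_dS1_chart_basePt_eq φ (ψ i)
  have hsum : ∑ i, dS1 (chart basePt φ) (chart basePt (ψ i)) ^ 2
      = ∑ i, (φ - (ψ i + k i * (2 * π))) ^ 2 := by
    simp only [hk, sq_abs]
  have hquad : ∀ θ, ∑ i, (φ - (ψ i + k i * (2 * π))) ^ 2 ≤ ∑ i, (θ - (ψ i + k i * (2 * π))) ^ 2 :=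
    fun θ => calc
      _ = ∑ i, dS1 (chart basePt φ) (chart basePt (ψ i)) ^ 2 := hsum.symm
      _ ≤ ∑ i, dS1 (chart basePt θ) (chart basePt (ψ i)) ^ 2 := hφ _
      _ ≤ _ := Finset.sum_le_sum fun i _ => by
        rw [← sq_abs (θ - _)]
        exact pow_le_pow_left₀ (by rw [dS1_eq_angle]; exact angle_nonneg _ _)
          (dS1_chart_basePt_le θ (ψ i) (k i)) 2
  rw [hsum]
  exact ⟨k, card_mul_eq_sum_of_forall_sum_sq_le hquad⟩

theorem exists_forall_ne_sum_sq_dS1_lt [Nonempty ι] {ψ : ι → ℝ} (hψ : IntIndepModPi ψ) :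
    ∃ p : S1, ∀ q, q ≠ p →
      ∑ i, dS1 p (chart basePt (ψ i)) ^ 2 < ∑ i, dS1 q (chart basePt (ψ i)) ^ 2 := by
  obtain ⟨p, -, hmin⟩ := isCompact_univ.exists_isMinOn ⟨basePt, mem_univ _⟩
    (continuous_finsetSum _ fun i _ =>
      (continuous_dS1_left (chart basePt (ψ i))).pow 2).continuousOn
  refine ⟨p, fun q hqp => lt_of_not_ge fun hle => hqp ?_⟩
  have hp : ∀ r, ∑ i, dS1 p (chart basePt (ψ i)) ^ 2 ≤ ∑ i, dS1 r (chart basePt (ψ i)) ^ 2 :=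
    fun r => hmin (mem_univ r)
  have hq : ∀ r, ∑ i, dS1 q (chart basePt (ψ i)) ^ 2 ≤ ∑ i, dS1 r (chart basePt (ψ i)) ^ 2 :=
    fun r => hle.trans (hp r)
  have heq := le_antisymm hle (hp q)
  rw [← chart_basePt_arg p] at hp heq
  rw [← chart_basePt_arg q] at hq heq
  obtain ⟨k, hkφ, hkG⟩ := exists_lift_of_forall_sum_sq_dS1_le ψ _ hp
  obtain ⟨k', hk'χ, hk'G⟩ := exists_lift_of_forall_sum_sq_dS1_le ψ _ hq
  obtain ⟨m, hm⟩ := exists_eq_add_int_mul_two_pi_of_spread_eq hψ hk'χ hkφ <| by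
    rw [← hkG, ← hk'G, heq]
  rw [← chart_basePt_arg q, ← chart_basePt_arg p, hm, chart_basePt_add_int_mul_two_pi]
end

lemma nullSingletonClass_map_of_injective {α β : Type*} [MeasurableSpace α] [MeasurableSpace β]
    [MeasurableSingletonClass β] {μ : Measure α} [NullSingletonClass μ] {f : α → β}
    (hf : Measurable f) (hinj : Function.Injective f) : NullSingletonClass (μ.map f) :=
  ⟨fun y => by
    rw [Measure.map_apply hf (measurableSet_singleton y)]
    exact (subsingleton_singleton.preimage hinj).measure_zero μ⟩

lemma pi_setOf_sum_mul_eq_null {n : ℕ} (ν : Measure ℝ) [SigmaFinite ν] [NullSingletonClass ν]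
    {a : Fin n → ℝ} (ha : a ≠ 0) (C : ℝ) :
    Measure.pi (fun _ => ν) {y | ∑ i, a i * y i = C} = 0 := by
  obtain ⟨j, hj⟩ := Function.ne_iff.1 ha
  obtain ⟨m, rfl⟩ : ∃ m, n = m + 1 := Nat.exists_eq_add_one_of_ne_zero (Fin.pos j).ne'
  set B : Set (ℝ × (Fin m → ℝ)) := {z | a j * z.1 + ∑ i, a (j.succAbove i) * z.2 i = C}
  have hB : MeasurableSet B := measurableSet_eq_fun (by fun_prop) measurable_const
  have hpre : {y : Fin (m + 1) → ℝ | ∑ i, a i * y i = C}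
      = MeasurableEquiv.piFinSuccAbove (fun _ => ℝ) j ⁻¹' B := by
    ext y
    simp [B, Fin.sum_univ_succAbove _ j, Fin.removeNth]
  rw [hpre, (measurePreserving_piFinSuccAbove (fun _ => ν) j).measure_preimage
    hB.nullMeasurableSet, Measure.prod_apply_symm hB]
  have hsection : ∀ z : Fin m → ℝ, ν ((fun t => (t, z)) ⁻¹' B) = 0 := fun z =>
    measure_mono_null (t := {(C - ∑ i, a (j.succAbove i) * z i) / a j})
      (fun t (ht : a j * t + _ = C) => by
        rw [mem_singleton_iff, eq_div_iff (by simpa using hj)]; linarith)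
      (measure_singleton _)
  simp [hsection]

lemma ae_intIndepModPi {n : ℕ} (ν : Measure ℝ) [SigmaFinite ν] [NullSingletonClass ν] :
    ∀ᵐ y ∂Measure.pi (fun _ : Fin n => ν), IntIndepModPi y := by
  refine ae_all_iff.2 fun a => ae_all_iff.2 fun N => ?_
  by_cases ha : a = 0
  · exact ae_of_all _ fun _ _ => ha
  refine measure_mono_null (fun y hy => ?_) (pi_setOf_sum_mul_eq_null ν
    (a := fun i => (a i : ℝ)) (fun h => ha (funext fun i => by simpa using congr_fun h i)) (π * N))
  exact (Classical.not_imp.1 hy).1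

theorem empirical_frechet_mean_exists_general (μ : Measure S1) [IsProbabilityMeasure μ]
    (hna : ∀ p : S1, μ {p} = 0)
    {Ω : Type} [MeasurableSpace Ω] (P : Measure Ω)
    (n : ℕ) (hn : 0 < n) (X : Fin n → Ω → S1) (hX : ∀ i, Measurable (X i))
    (hlaw : ∀ i, Measure.map (X i) P = μ)
    (hindep : ProbabilityTheory.iIndepFun X P) :
    ∀ᵐ ω ∂P, ∃ pstar : S1, ∀ q : S1, q ≠ pstar →
      (1 / (2 * (n:ℝ))) * ∑ i, (dS1 pstar (X i ω))^2 <
      (1 / (2 * (n:ℝ))) * ∑ i, (dS1 q (X i ω))^2 := by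
  have : NullSingletonClass μ := ⟨hna⟩
  have : Nonempty (Fin n) := ⟨⟨0, hn⟩⟩
  have harg : Measurable fun x : S1 => Complex.arg x :=
    Complex.measurable_arg.comp measurable_subtype_coe
  have : NullSingletonClass (μ.map fun x : S1 => Complex.arg x) :=
    nullSingletonClass_map_of_injective harg (Function.LeftInverse.injective chart_basePt_arg)
  have hlawArg : P.map (fun ω i => Complex.arg (X i ω))
      = Measure.pi fun _ => μ.map fun x : S1 => Complex.arg x := by
    refine ((hindep.comp _ fun _ => harg).map_fun_eq_pi_map
      fun i => (harg.comp (hX i)).aemeasurable).trans ?_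
    congr with i : 1
    rw [← Measure.map_map harg (hX i), hlaw i]
  have hgeneric : ∀ᵐ ω ∂P, IntIndepModPi fun i => Complex.arg (X i ω) :=
    ae_of_ae_map (measurable_pi_lambda _ fun i => harg.comp (hX i)).aemeasurable
      (hlawArg ▸ ae_intIndepModPi _)
  filter_upwards [hgeneric] with ω hω
  obtain ⟨p, hp⟩ := exists_forall_ne_sum_sq_dS1_lt hω
  simp only [chart_basePt_arg] at hp
  exact ⟨p, fun q hq => mul_lt_mul_of_pos_left (hp q hq) (by positivity)⟩

/-- Lemma `lemme.EFM`: for i.i.d. observations from a non-atomic law `μ`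
on `S¹`, the empirical Fréchet mean exists (the empirical Fréchet functional has a
unique global minimizer) almost surely. -/
theorem empirical_frechet_mean_exists (μ : Measure S1) [IsProbabilityMeasure μ]
    (hna : ∀ p : S1, μ {p} = 0)
    {Ω : Type} [MeasurableSpace Ω] (P : Measure Ω) [IsProbabilityMeasure P]
    (n : ℕ) (hn : 0 < n) (X : Fin n → Ω → S1) (hX : ∀ i, Measurable (X i))
    (hlaw : ∀ i, Measure.map (X i) P = μ)
    (hindep : ProbabilityTheory.iIndepFun X P) :
    ∀ᵐ ω ∂P, ∃ pstar : S1, ∀ q : S1, q ≠ pstar →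
      (1 / (2 * (n:ℝ))) * ∑ i, (dS1 pstar (X i ω))^2 <
      (1 / (2 * (n:ℝ))) * ∑ i, (dS1 q (X i ω))^2 :=
  empirical_frechet_mean_exists_general μ hna P n hn X hX hlaw hindep
end
end
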